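/- Endow the set of approach regions ending at w ∈ ∂D with the topology generated by the subbase of sets O(A,r) = {A' : A' ⊇ A ∩ B(w,r)} for approach regions A and r > 0. Then the function A ↦ A^♮ = inf_{r>0} sup_{z∈A∩B(w,r)} τ(w,z) is lower semicontinuous, and the function A ↦ A_♮ = sup_{r>0} inf_{z∈A∩B(w,r)} τ(w,z) is upper semicontinuous with respect to this topology. -/

import Mathlib

open Metric Set

noncomputable section

def unitDisc : Set ℂ := {z | ‖z‖ < 1}

def tau (w z : ℂ) : ℝ := (1 - ‖z‖) / ‖w - z‖

/-- `A_♮ = sup_{r>0} inf_{z ∈ A ∩ B(w,r)} τ(w,z)` -/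
def lowTau (w : ℂ) (A : Set ℂ) : ℝ :=
  sSup ((fun r => sInf (tau w '' (A ∩ ball w r))) '' Ioi (0:ℝ))

/-- `A^♮ = inf_{r>0} sup_{z ∈ A ∩ B(w,r)} τ(w,z)` -/
def highTau (w : ℂ) (A : Set ℂ) : ℝ :=
  sInf ((fun r => sSup (tau w '' (A ∩ ball w r))) '' Ioi (0:ℝ))

/-- The approach regions ending at `w`. -/
def AR (w : ℂ) := {A : Set ℂ // A ⊆ unitDisc ∧ w ∈ closure A}

/-- The rough topology on the approach regions ending at `w`: generated by the
subbase of sets `O(A,r) = {A' : A' ⊇ A ∩ B(w,r)}`. -/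
def roughTopology (w : ℂ) : TopologicalSpace (AR w) :=
  TopologicalSpace.generateFrom
    {O | ∃ B : AR w, ∃ r : ℝ, 0 < r ∧ O = {A' : AR w | B.1 ∩ ball w r ⊆ A'.1}}

/-!
Both quantities only see the germ of `A` at `w`: if `A ∩ B(w,r₀) ⊆ A'`, then for `r` below `r₀`
the set `A ∩ B(w,r)` is contained in `A' ∩ B(w,r)`, and since `τ(w,·)` takes values in `[0,1]` on
the disc the suprema grow and the infima shrink, giving `A^♮ ≤ A'^♮` and `A'_♮ ≤ A_♮`. As
`O(A,r₀)` is an open neighbourhood of `A`, every `A` is a local minimum of `A ↦ A^♮` and a local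
maximum of `A ↦ A_♮`, which is semicontinuity.
-/

lemma tau_nonneg {w z : ℂ} (hz : ‖z‖ ≤ 1) : 0 ≤ tau w z :=
  div_nonneg (sub_nonneg.2 hz) (norm_nonneg _)

lemma tau_le_one {w z : ℂ} (hw : 1 ≤ ‖w‖) (hz : ‖z‖ < 1) : tau w z ≤ 1 := by
  have hdist : 1 - ‖z‖ ≤ ‖w - z‖ := by linarith [norm_sub_norm_le w z]
  exact (div_le_one (by linarith)).2 hdist

section Monotonicity

variable {w : ℂ} {A A' : Set ℂ}

lemma tau_image_inter_ball_subset_Icc (hw : 1 ≤ ‖w‖) (hA : A ⊆ unitDisc) (r : ℝ) :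
    tau w '' (A ∩ ball w r) ⊆ Icc 0 1 := by
  rintro _ ⟨z, ⟨hzA, -⟩, rfl⟩
  exact ⟨tau_nonneg (hA hzA).le, tau_le_one hw (hA hzA)⟩

lemma tau_image_inter_ball_nonempty (hwA : w ∈ closure A) {r : ℝ} (hr : 0 < r) :
    (tau w '' (A ∩ ball w r)).Nonempty := by
  obtain ⟨z, hzA, hwz⟩ := Metric.mem_closure_iff.1 hwA r hr
  exact ⟨tau w z, z, ⟨hzA, mem_ball'.2 hwz⟩, rfl⟩

lemma tau_image_inter_ball_min_subset {r₀ : ℝ} (h : A ∩ ball w r₀ ⊆ A') (r : ℝ) :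
    tau w '' (A ∩ ball w (min r r₀)) ⊆ tau w '' (A' ∩ ball w r) :=
  image_mono fun _ ⟨hzA, hz⟩ =>
    ⟨h ⟨hzA, ball_subset_ball (min_le_right _ _) hz⟩, ball_subset_ball (min_le_left _ _) hz⟩

lemma highTau_le_of_inter_ball_subset (hw : 1 ≤ ‖w‖) (hA : A ⊆ unitDisc) (hwA : w ∈ closure A)
    (hA' : A' ⊆ unitDisc) {r₀ : ℝ} (hr₀ : 0 < r₀) (h : A ∩ ball w r₀ ⊆ A') :
    highTau w A ≤ highTau w A' := by
  have hbdd : BddBelow ((fun r => sSup (tau w '' (A ∩ ball w r))) '' Ioi 0) := by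
    refine ⟨0, ?_⟩
    rintro _ ⟨r, -, rfl⟩
    exact Real.sSup_nonneg fun x hx => (tau_image_inter_ball_subset_Icc hw hA r hx).1
  refine le_csInf (nonempty_Ioi.image _) ?_
  rintro _ ⟨r, hr, rfl⟩
  have hmin : 0 < min r r₀ := lt_min hr hr₀
  calc highTau w A ≤ sSup (tau w '' (A ∩ ball w (min r r₀))) :=
        csInf_le hbdd ⟨min r r₀, hmin, rfl⟩
    _ ≤ sSup (tau w '' (A' ∩ ball w r)) :=
        csSup_le_csSup (bddAbove_Icc.mono (tau_image_inter_ball_subset_Icc hw hA' r))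
          (tau_image_inter_ball_nonempty hwA hmin) (tau_image_inter_ball_min_subset h r)

lemma lowTau_le_of_inter_ball_subset (hw : 1 ≤ ‖w‖) (hA : A ⊆ unitDisc) (hwA : w ∈ closure A)
    (hA' : A' ⊆ unitDisc) {r₀ : ℝ} (hr₀ : 0 < r₀) (h : A ∩ ball w r₀ ⊆ A') :
    lowTau w A' ≤ lowTau w A := by
  have hbdd : BddAbove ((fun r => sInf (tau w '' (A ∩ ball w r))) '' Ioi 0) := by
    refine ⟨1, ?_⟩
    rintro _ ⟨r, hr, rfl⟩
    obtain ⟨x, hx⟩ := tau_image_inter_ball_nonempty hwA hr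
    exact csInf_le_of_le (bddBelow_Icc.mono (tau_image_inter_ball_subset_Icc hw hA r)) hx
      (tau_image_inter_ball_subset_Icc hw hA r hx).2
  refine csSup_le (nonempty_Ioi.image _) ?_
  rintro _ ⟨r, hr, rfl⟩
  have hmin : 0 < min r r₀ := lt_min hr hr₀
  calc sInf (tau w '' (A' ∩ ball w r)) ≤ sInf (tau w '' (A ∩ ball w (min r r₀))) :=
        csInf_le_csInf (bddBelow_Icc.mono (tau_image_inter_ball_subset_Icc hw hA' r))
          (tau_image_inter_ball_nonempty hwA hmin) (tau_image_inter_ball_min_subset h r)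
    _ ≤ lowTau w A := le_csSup hbdd ⟨min r r₀, hmin, rfl⟩

end Monotonicity

lemma lowerSemicontinuous_of_isLocalMin {X β : Type*} [TopologicalSpace X] [Preorder β]
    {f : X → β} (h : ∀ x, IsLocalMin f x) : LowerSemicontinuous f :=
  fun x _ hy => (h x).mono fun _ hx' => hy.trans_le hx'

lemma upperSemicontinuous_of_isLocalMax {X β : Type*} [TopologicalSpace X] [Preorder β]
    {f : X → β} (h : ∀ x, IsLocalMax f x) : UpperSemicontinuous f :=
  fun x _ hy => (h x).mono fun _ hx' => hx'.trans_lt hy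

lemma setOf_inter_ball_subset_mem_nhds {w : ℂ} (A : AR w) {r : ℝ} (hr : 0 < r) :
    {A' : AR w | A.1 ∩ ball w r ⊆ A'.1} ∈ @nhds (AR w) (roughTopology w) A :=
  @IsOpen.mem_nhds _ (roughTopology w) _ _
    (TopologicalSpace.GenerateOpen.basic _ ⟨A, r, hr, rfl⟩) inter_subset_left

theorem stmt15 (w : ℂ) (hw : ‖w‖ = 1) :
    @LowerSemicontinuous (AR w) ℝ (roughTopology w) _
      (fun A : AR w => highTau w A.1) ∧
    @UpperSemicontinuous (AR w) ℝ (roughTopology w) _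
      (fun A : AR w => lowTau w A.1) := by
  let _ := roughTopology w
  constructor
  · refine lowerSemicontinuous_of_isLocalMin fun A => ?_
    filter_upwards [setOf_inter_ball_subset_mem_nhds A one_pos] with A' hA'
    exact highTau_le_of_inter_ball_subset hw.ge A.2.1 A.2.2 A'.2.1 one_pos hA'
  · refine upperSemicontinuous_of_isLocalMax fun A => ?_
    filter_upwards [setOf_inter_ball_subset_mem_nhds A one_pos] with A' hA'
    exact lowTau_le_of_inter_ball_subset hw.ge A.2.1 A.2.2 A'.2.1 one_pos hA'
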